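/- (No impossible measurements, algebraically.) Let A, B_A, B_B be unital algebras with scattering maps Θ_A on A ⊗ B_A and Θ_B on A ⊗ B_B, and combined scattering map Θ = (Θ_A ⊗ id) ∘ (Θ_B ⊗₂ id) on A ⊗ B_A ⊗ B_B. Suppose c ∈ A is such that Θ_B(c ⊗ 1) lies in a subalgebra N ⊗ B_B with N ⊆ A a subalgebra on which Θ_A acts trivially, i.e., Θ_A(n ⊗ 1) = n ⊗ 1 for all n ∈ N. Then for all states ω on A, σ_A on B_A, σ_B on B_B: (ω ⊗ σ_A ⊗ σ_B)(Θ(c ⊗ 1 ⊗ 1)) = (ω ⊗ σ_B)(Θ_B(c ⊗ 1)). That is, the nonselective updates ω_{AB} and ω_B agree on c. -/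

import Mathlib

open scoped TensorProduct ComplexOrder

/-- The product functional `ω ⊗ σ` on `A ⊗ B`. -/
noncomputable def tensorFun {A B : Type*} [Ring A] [Ring B] [Algebra ℂ A] [Algebra ℂ B]
    (ω : A →ₗ[ℂ] ℂ) (σ : B →ₗ[ℂ] ℂ) : A ⊗[ℂ] B →ₗ[ℂ] ℂ :=
  (TensorProduct.lid ℂ ℂ).toLinearMap ∘ₗ TensorProduct.map ω σ

/-- Reordering isomorphism `(A ⊗ B₁) ⊗ B₂ ≃ (A ⊗ B₂) ⊗ B₁`. -/
noncomputable def reorder (A B₁ B₂ : Type*) [Ring A] [Ring B₁] [Ring B₂]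
    [Algebra ℂ A] [Algebra ℂ B₁] [Algebra ℂ B₂] :
    (A ⊗[ℂ] B₁) ⊗[ℂ] B₂ ≃ₐ[ℂ] (A ⊗[ℂ] B₂) ⊗[ℂ] B₁ :=
  (Algebra.TensorProduct.assoc ℂ ℂ ℂ A B₁ B₂).trans
    ((Algebra.TensorProduct.congr AlgEquiv.refl (Algebra.TensorProduct.comm ℂ B₁ B₂)).trans
      (Algebra.TensorProduct.assoc ℂ ℂ ℂ A B₂ B₁).symm)

/-- The extension `Θ₂ ⊗₂ id` of `Θ₂ : A ⊗ B₂ → A ⊗ B₂` to `(A ⊗ B₁) ⊗ B₂`,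
acting as `Θ₂` on the `A` and `B₂` factors. -/
noncomputable def extend₂ {A B₁ B₂ : Type*} [Ring A] [Ring B₁] [Ring B₂]
    [Algebra ℂ A] [Algebra ℂ B₁] [Algebra ℂ B₂]
    (Θ₂ : A ⊗[ℂ] B₂ →ₐ[ℂ] A ⊗[ℂ] B₂) :
    (A ⊗[ℂ] B₁) ⊗[ℂ] B₂ →ₐ[ℂ] (A ⊗[ℂ] B₁) ⊗[ℂ] B₂ :=
  ((reorder A B₁ B₂).symm.toAlgHom.comp
    (Algebra.TensorProduct.map Θ₂ (AlgHom.id ℂ B₁))).comp (reorder A B₁ B₂).toAlgHom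

/-! `Θ_B ⊗₂ id` sends `c ⊗ 1 ⊗ 1` to an element of `N ⊗ 1 ⊗ B_B`, which
`Θ_A ⊗ id` fixes because `Θ_A` fixes `N ⊗ 1`; on elements carrying `1` in the `B_A` slot,
`ω ⊗ σ_A ⊗ σ_B` agrees with `ω ⊗ σ_B` because `σ_A 1 = 1`. -/

@[simp]
theorem tensorFun_tmul {A B : Type*} [Ring A] [Ring B] [Algebra ℂ A] [Algebra ℂ B]
    (ω : A →ₗ[ℂ] ℂ) (σ : B →ₗ[ℂ] ℂ) (a : A) (b : B) :
    tensorFun ω σ (a ⊗ₜ[ℂ] b) = ω a * σ b :=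
  rfl

section Reorder

variable {A B₁ B₂ : Type*} [Ring A] [Ring B₁] [Ring B₂]
  [Algebra ℂ A] [Algebra ℂ B₁] [Algebra ℂ B₂]

@[simp]
theorem reorder_tmul (a : A) (b₁ : B₁) (b₂ : B₂) :
    reorder A B₁ B₂ ((a ⊗ₜ[ℂ] b₁) ⊗ₜ[ℂ] b₂) = (a ⊗ₜ[ℂ] b₂) ⊗ₜ[ℂ] b₁ :=
  rfl

@[simp]
theorem reorder_symm_tmul (a : A) (b₁ : B₁) (b₂ : B₂) :
    (reorder A B₁ B₂).symm ((a ⊗ₜ[ℂ] b₂) ⊗ₜ[ℂ] b₁) = (a ⊗ₜ[ℂ] b₁) ⊗ₜ[ℂ] b₂ :=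
  (AlgEquiv.symm_apply_eq _).2 (reorder_tmul a b₁ b₂).symm

theorem extend₂_tmul (Θ₂ : A ⊗[ℂ] B₂ →ₐ[ℂ] A ⊗[ℂ] B₂) (a : A) (b₁ : B₁) (b₂ : B₂) :
    extend₂ Θ₂ ((a ⊗ₜ[ℂ] b₁) ⊗ₜ[ℂ] b₂) = (reorder A B₁ B₂).symm (Θ₂ (a ⊗ₜ[ℂ] b₂) ⊗ₜ[ℂ] b₁) := by
  simp [extend₂]

theorem tensorFun_tensorFun_reorder_symm_tmul (ω : A →ₗ[ℂ] ℂ) (σ₁ : B₁ →ₗ[ℂ] ℂ)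
    (σ₂ : B₂ →ₗ[ℂ] ℂ) (y : A ⊗[ℂ] B₂) (b₁ : B₁) :
    tensorFun (tensorFun ω σ₁) σ₂ ((reorder A B₁ B₂).symm (y ⊗ₜ[ℂ] b₁)) =
      σ₁ b₁ * tensorFun ω σ₂ y := by
  induction y using TensorProduct.induction_on with
  | zero => simp
  | tmul a b₂ => simp only [reorder_symm_tmul, tensorFun_tmul]; ring
  | add y z hy hz => simp only [TensorProduct.add_tmul, map_add, hy, hz, mul_add]

theorem map_reorder_symm_tmul_one_of_forall_mem {Θ₁ : A ⊗[ℂ] B₁ →ₐ[ℂ] A ⊗[ℂ] B₁}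
    {N : Subalgebra ℂ A} (hN : ∀ n ∈ N, Θ₁ (n ⊗ₜ[ℂ] (1 : B₁)) = n ⊗ₜ[ℂ] (1 : B₁))
    (x : N ⊗[ℂ] B₂) :
    Algebra.TensorProduct.map Θ₁ (AlgHom.id ℂ B₂)
        ((reorder A B₁ B₂).symm (Algebra.TensorProduct.map N.val (AlgHom.id ℂ B₂) x ⊗ₜ 1)) =
      (reorder A B₁ B₂).symm (Algebra.TensorProduct.map N.val (AlgHom.id ℂ B₂) x ⊗ₜ 1) := by
  induction x using TensorProduct.induction_on with
  | zero => simp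
  | tmul n b₂ => simp [hN n n.2]
  | add y z hy hz => simp only [map_add, TensorProduct.add_tmul, hy, hz]

end Reorder

theorem no_impossible_measurements_general {A BA BB : Type*} [Ring A] [Ring BA] [Ring BB]
    [Algebra ℂ A] [Algebra ℂ BA] [Algebra ℂ BB]
    (ΘA : A ⊗[ℂ] BA →ₐ[ℂ] A ⊗[ℂ] BA) (ΘB : A ⊗[ℂ] BB →ₐ[ℂ] A ⊗[ℂ] BB)
    (Θ : (A ⊗[ℂ] BA) ⊗[ℂ] BB →ₐ[ℂ] (A ⊗[ℂ] BA) ⊗[ℂ] BB)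
    (hfact : Θ = (Algebra.TensorProduct.map ΘA (AlgHom.id ℂ BB)).comp (extend₂ ΘB))
    (N : Subalgebra ℂ A)
    (hN : ∀ n ∈ N, ΘA (n ⊗ₜ[ℂ] (1 : BA)) = n ⊗ₜ[ℂ] (1 : BA))
    (c : A)
    (hc : ∃ x : N ⊗[ℂ] BB,
      Algebra.TensorProduct.map N.val (AlgHom.id ℂ BB) x = ΘB (c ⊗ₜ[ℂ] (1 : BB)))
    (ω : A →ₗ[ℂ] ℂ)
    (σA : BA →ₗ[ℂ] ℂ) (hσA1 : σA 1 = 1)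
    (σB : BB →ₗ[ℂ] ℂ) :
    tensorFun (tensorFun ω σA) σB (Θ ((c ⊗ₜ[ℂ] (1 : BA)) ⊗ₜ[ℂ] (1 : BB))) =
      tensorFun ω σB (ΘB (c ⊗ₜ[ℂ] (1 : BB))) := by
  obtain ⟨x, hx⟩ := hc
  rw [hfact, AlgHom.comp_apply, extend₂_tmul, ← hx, map_reorder_symm_tmul_one_of_forall_mem hN,
    tensorFun_tensorFun_reorder_symm_tmul, hσA1, one_mul]

/-- No impossible measurements: if `Θ_B(c ⊗ 1)` lies in `N ⊗ B_B` for a subalgebra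
`N ⊆ A` on which `Θ_A` acts trivially, then the nonselective updates by Alice-and-Bob
and by Bob alone agree on `c`:
`(ω ⊗ σ_A ⊗ σ_B)(Θ(c ⊗ 1 ⊗ 1)) = (ω ⊗ σ_B)(Θ_B(c ⊗ 1))`, where
`Θ = (Θ_A ⊗ id) ∘ (Θ_B ⊗₂ id)`. -/
theorem no_impossible_measurements {A BA BB : Type*} [Ring A] [Ring BA] [Ring BB]
    [Algebra ℂ A] [Algebra ℂ BA] [Algebra ℂ BB]
    [StarRing A] [StarModule ℂ A] [StarRing BA] [StarModule ℂ BA]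
    [StarRing BB] [StarModule ℂ BB]
    (ΘA : A ⊗[ℂ] BA →ₐ[ℂ] A ⊗[ℂ] BA) (ΘB : A ⊗[ℂ] BB →ₐ[ℂ] A ⊗[ℂ] BB)
    (Θ : (A ⊗[ℂ] BA) ⊗[ℂ] BB →ₐ[ℂ] (A ⊗[ℂ] BA) ⊗[ℂ] BB)
    (hfact : Θ = (Algebra.TensorProduct.map ΘA (AlgHom.id ℂ BB)).comp (extend₂ ΘB))
    (N : Subalgebra ℂ A)
    (hN : ∀ n ∈ N, ΘA (n ⊗ₜ[ℂ] (1 : BA)) = n ⊗ₜ[ℂ] (1 : BA))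
    (c : A)
    (hc : ∃ x : N ⊗[ℂ] BB,
      Algebra.TensorProduct.map N.val (AlgHom.id ℂ BB) x = ΘB (c ⊗ₜ[ℂ] (1 : BB)))
    (ω : A →ₗ[ℂ] ℂ) (hω1 : ω 1 = 1) (hωpos : ∀ x, 0 ≤ ω (star x * x))
    (σA : BA →ₗ[ℂ] ℂ) (hσA1 : σA 1 = 1) (hσApos : ∀ b, 0 ≤ σA (star b * b))
    (σB : BB →ₗ[ℂ] ℂ) (hσB1 : σB 1 = 1) (hσBpos : ∀ b, 0 ≤ σB (star b * b)) :
    tensorFun (tensorFun ω σA) σB (Θ ((c ⊗ₜ[ℂ] (1 : BA)) ⊗ₜ[ℂ] (1 : BB))) =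
      tensorFun ω σB (ΘB (c ⊗ₜ[ℂ] (1 : BB))) :=
  no_impossible_measurements_general ΘA ΘB Θ hfact N hN c hc ω σA hσA1 σB
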